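/- If λ₀ > 0 (the bottom of the spectrum of L^{0,α} is strictly positive) and the unkilled diffusion is recurrent, i.e. ∫₀^∞ ρ(x)⁻¹ dx = ∞, then the speed measure is finite: ∫₀^∞ ρ(x) dx < ∞. -/

import Mathlib

open MeasureTheory Filter Set Topology
open scoped ENNReal NNReal

noncomputable section

namespace KS

/-- The density `ρ(x) = exp(2∫₀ˣ b(s) ds)` of the speed measure `Γ = ρ·dx` on `(0,∞)`. -/
def rho (b : ℝ → ℝ) (x : ℝ) : ℝ := Real.exp (2 * ∫ s in (0:ℝ)..x, b s)

/-- `∫_{A ∩ (0,∞)} f dΓ`: the integral of `f` over `A` against the speed measure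
`Γ = ρ(x)dx` on `(0,∞)`. -/
def gInt (b : ℝ → ℝ) (A : Set ℝ) (f : ℝ → ℝ) : ℝ :=
  ∫ x in A ∩ Set.Ioi (0:ℝ), f x * rho b x

/-- Standing regularity assumptions on the drift `b` and the killing rate `κ`:
`b ∈ L¹_loc([0,∞)) ∩ C((0,∞))` and `0 ≤ κ ∈ C([0,∞))`. -/
structure Coeffs (b κ : ℝ → ℝ) : Prop where
  hb_cont : ContinuousOn b (Set.Ioi 0)
  hb_loc : LocallyIntegrableOn b (Set.Ici 0) volume
  hk_cont : ContinuousOn κ (Set.Ici 0)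
  hk_nonneg : ∀ x, 0 ≤ κ x

/-- The boundary point `0` is regular: `∫₀¹ ρ < ∞` and `∫₀¹ ρ⁻¹ < ∞`. -/
def RegularZero (b : ℝ → ℝ) : Prop :=
  IntegrableOn (fun x => rho b x) (Set.Ioc 0 1) volume ∧
  IntegrableOn (fun x => (rho b x)⁻¹) (Set.Ioc 0 1) volume

/-- The boundary point `∞` is accessible: `∫₁^∞ ρ(y)⁻¹ ∫₁^y ρ(z) dz dy < ∞`. -/
def AccessibleInfty (b : ℝ → ℝ) : Prop :=
  IntegrableOn (fun y => (rho b y)⁻¹ * ∫ z in Set.Ioc 1 y, rho b z) (Set.Ioi 1) volume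

/-- The boundary point `∞` is inaccessible. -/
def InaccessibleInfty (b : ℝ → ℝ) : Prop := ¬ AccessibleInfty b

/-- `∞` is a natural boundary:
`∫₁^∞ ρ(y)∫₁^y ρ(z)⁻¹ dz dy = ∞` and `∫₁^∞ ρ(y)⁻¹∫₁^y ρ(z) dz dy = ∞`. -/
def NaturalInfty (b : ℝ → ℝ) : Prop :=
  (¬ IntegrableOn (fun y => rho b y * ∫ z in Set.Ioc 1 y, (rho b z)⁻¹) (Set.Ioi 1) volume) ∧
  (¬ IntegrableOn (fun y => (rho b y)⁻¹ * ∫ z in Set.Ioc 1 y, rho b z) (Set.Ioi 1) volume)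

/-- `∞` is an entrance boundary: inaccessible, and `∫₁^∞ ρ(y)∫₁^y ρ(z)⁻¹ dz dy < ∞`. -/
def EntranceInfty (b : ℝ → ℝ) : Prop :=
  InaccessibleInfty b ∧
  IntegrableOn (fun y => rho b y * ∫ z in Set.Ioc 1 y, (rho b z)⁻¹) (Set.Ioi 1) volume

/-- The (unkilled) diffusion is recurrent: `∫₀^∞ ρ(x)⁻¹ dx = ∞`. -/
def Recurrent (b : ℝ → ℝ) : Prop :=
  ¬ IntegrableOn (fun x => (rho b x)⁻¹) (Set.Ioi 0) volume

/-- The (unkilled) diffusion is transient: `∫₀^∞ ρ(x)⁻¹ dx < ∞`. -/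
def Transient (b : ℝ → ℝ) : Prop :=
  IntegrableOn (fun x => (rho b x)⁻¹) (Set.Ioi 0) volume

/-- The formal Sturm–Liouville expression `τ f = −(1/(2ρ))(ρ f′)′ + κ f`,
whose self-adjoint realization is `L^{κ,α}`. -/
def tau (b κ : ℝ → ℝ) (f : ℝ → ℝ) (x : ℝ) : ℝ :=
  -(1 / (2 * rho b x)) * deriv (fun y => rho b y * deriv f y) x + κ x * f x

/-- The boundary condition at `0` with parameter `α ∈ [0,∞]`: `f′(0) = α f(0)`,
i.e. `(1−p₀) f(0) = (1/2) p₀ f′(0)`; Dirichlet (`f(0) = 0`) when `α = ∞`. -/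
def BoundaryCond (α : ℝ≥0∞) (f : ℝ → ℝ) : Prop :=
  (α = ⊤ → f 0 = 0) ∧ (α ≠ ⊤ → deriv f 0 = α.toReal * f 0)

/-- Membership in the domain of the self-adjoint realization `L^{κ,α}` of `τ`
in `L²((0,∞),Γ)` (`0` regular, `∞` in the limit-point case): `f` and `ρf′`
differentiable, `f` and `τf` square-integrable for `Γ`, boundary condition at `0`. -/
structure MemDomain (b κ : ℝ → ℝ) (α : ℝ≥0∞) (f : ℝ → ℝ) : Prop where
  diff1 : ∀ x ∈ Set.Ici (0:ℝ), DifferentiableAt ℝ f x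
  diff2 : ∀ x ∈ Set.Ici (0:ℝ), DifferentiableAt ℝ (fun y => rho b y * deriv f y) x
  memL2 : IntegrableOn (fun x => (f x) ^ 2 * rho b x) (Set.Ioi 0) volume
  tau_memL2 : IntegrableOn (fun x => (tau b κ f x) ^ 2 * rho b x) (Set.Ioi 0) volume
  bc : BoundaryCond α f

/-- `μ` belongs to the spectrum `Σ(L^{κ,α})`, via Weyl's approximate-eigenvalue
criterion (which characterizes the spectrum of a self-adjoint operator). -/
def InSpectrum (b κ : ℝ → ℝ) (α : ℝ≥0∞) (μ : ℝ) : Prop :=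
  ∃ f : ℕ → ℝ → ℝ, (∀ n, MemDomain b κ α (f n)) ∧
    (∀ n, gInt b Set.univ (fun x => (f n x) ^ 2) = 1) ∧
    Tendsto (fun n => gInt b Set.univ (fun x => (tau b κ (f n) x - μ * f n x) ^ 2))
      atTop (nhds 0)

/-- `μ` belongs to the essential spectrum `Σ_ess(L^{κ,α})`, via the singular
(orthonormal) Weyl sequence criterion; its complement in the spectrum consists of
the isolated eigenvalues of finite multiplicity. -/
def InEssSpectrum (b κ : ℝ → ℝ) (α : ℝ≥0∞) (μ : ℝ) : Prop :=
  ∃ f : ℕ → ℝ → ℝ, (∀ n, MemDomain b κ α (f n)) ∧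
    (∀ n, gInt b Set.univ (fun x => (f n x) ^ 2) = 1) ∧
    (∀ m n, m ≠ n → gInt b Set.univ (fun x => f m x * f n x) = 0) ∧
    Tendsto (fun n => gInt b Set.univ (fun x => (tau b κ (f n) x - μ * f n x) ^ 2))
      atTop (nhds 0)

/-- `λ₀^κ`, the bottom of the spectrum of `L^{κ,α}`. -/
def lam0 (b κ : ℝ → ℝ) (α : ℝ≥0∞) : ℝ := sInf {μ | InSpectrum b κ α μ}

/-- `u` is an eigenfunction of `L^{κ,α}` for the eigenvalue `μ`. -/
def IsEigenfun (b κ : ℝ → ℝ) (α : ℝ≥0∞) (μ : ℝ) (u : ℝ → ℝ) : Prop :=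
  MemDomain b κ α u ∧ (∃ x ∈ Set.Ioi (0:ℝ), u x ≠ 0) ∧
    ∀ x ∈ Set.Ioi (0:ℝ), tau b κ u x = μ * u x

/-- `μ` is an isolated point of the spectrum of `L^{κ,α}`. -/
def IsolatedInSpectrum (b κ : ℝ → ℝ) (α : ℝ≥0∞) (μ : ℝ) : Prop :=
  InSpectrum b κ α μ ∧ ∃ ε > (0:ℝ), ∀ μ', InSpectrum b κ α μ' → μ' ≠ μ → ε ≤ |μ' - μ|

/-- `u = φ(λ,·)`: the canonical solution of the eigenvalue ODE `(τ − λ)u = 0` with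
`u(0) = 1/(1+α)` and `u′(0) = α/(1+α)` (`u(0) = 0`, `u′(0) = 1` when `α = ∞`). -/
structure IsPhi (b κ : ℝ → ℝ) (α : ℝ≥0∞) (lam : ℝ) (u : ℝ → ℝ) : Prop where
  diff1 : ∀ x ∈ Set.Ici (0:ℝ), DifferentiableAt ℝ u x
  diff2 : ∀ x ∈ Set.Ici (0:ℝ), DifferentiableAt ℝ (fun y => rho b y * deriv u y) x
  ode : ∀ x ∈ Set.Ioi (0:ℝ), tau b κ u x = lam * u x
  init_top : α = ⊤ → u 0 = 0 ∧ deriv u 0 = 1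
  init_fin : α ≠ ⊤ → u 0 = 1 / (1 + α.toReal) ∧ deriv u 0 = α.toReal / (1 + α.toReal)

/-- `p` is the (jointly continuous, symmetric, sub-Markov) integral kernel of the
semigroup `e^{−tL^{κ,α}}` with respect to the speed measure `Γ`; by the
Feynman–Kac formula this is the transition sub-density of the killed diffusion:
`E_x[f(X_t); τ_∂ > t] = ∫₀^∞ p(t,x,y) f(y) dΓ(y)`. -/
structure IsKernel (b κ : ℝ → ℝ) (α : ℝ≥0∞) (p : ℝ → ℝ → ℝ → ℝ) : Prop where
  cont : ContinuousOn (fun q : ℝ × ℝ × ℝ => p q.1 q.2.1 q.2.2)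
      (Set.Ioi 0 ×ˢ (Set.Ioi 0 ×ˢ Set.Ioi 0))
  nonneg : ∀ t > (0:ℝ), ∀ x > (0:ℝ), ∀ y > (0:ℝ), 0 ≤ p t x y
  symm : ∀ t x y, p t x y = p t y x
  chapman : ∀ s > (0:ℝ), ∀ t > (0:ℝ), ∀ x > (0:ℝ), ∀ y > (0:ℝ),
      p (s + t) x y = gInt b Set.univ (fun z => p s x z * p t z y)
  submarkov : ∀ t > (0:ℝ), ∀ x > (0:ℝ), gInt b Set.univ (fun y => p t x y) ≤ 1
  generator : ∀ f : ℝ → ℝ, MemDomain b κ α f → ∀ x > (0:ℝ), ∀ t > (0:ℝ),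
      HasDerivAt (fun s => gInt b Set.univ (fun y => p s x y * f y))
        (-(gInt b Set.univ (fun y => p t x y * tau b κ f y))) t
  initial : ∀ f : ℝ → ℝ, Continuous f → HasCompactSupport f → ∀ x > (0:ℝ),
      Tendsto (fun t => gInt b Set.univ (fun y => p t x y * f y))
        (𝓝[>] (0:ℝ)) (nhds (f x))

/-- `P_x(X_t ∈ A, τ_∂ > t)`. -/
def hitPt (b : ℝ → ℝ) (p : ℝ → ℝ → ℝ → ℝ) (x t : ℝ) (A : Set ℝ) : ℝ :=
  gInt b A (fun y => p t x y)

/-- `P_x(τ_∂ > t)`. -/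
def survivePt (b : ℝ → ℝ) (p : ℝ → ℝ → ℝ → ℝ) (x t : ℝ) : ℝ :=
  hitPt b p x t Set.univ

/-- `P_ν(X_t ∈ A, τ_∂ > t)`. -/
def hitProb (b : ℝ → ℝ) (p : ℝ → ℝ → ℝ → ℝ) (ν : Measure ℝ) (t : ℝ) (A : Set ℝ) : ℝ :=
  ∫ x, hitPt b p x t A ∂ν

/-- `P_ν(τ_∂ > t)`. -/
def surviveProb (b : ℝ → ℝ) (p : ℝ → ℝ → ℝ → ℝ) (ν : Measure ℝ) (t : ℝ) : ℝ :=
  hitProb b p ν t Set.univ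

/-- `P_ν(X_t ∈ A ∣ τ_∂ > t)`. -/
def condProb (b : ℝ → ℝ) (p : ℝ → ℝ → ℝ → ℝ) (ν : Measure ℝ) (t : ℝ) (A : Set ℝ) : ℝ :=
  hitProb b p ν t A / surviveProb b p ν t

/-- an initial distribution compactly supported in `(0,∞)`. -/
def InitDist (ν : Measure ℝ) : Prop :=
  IsProbabilityMeasure ν ∧ ∃ K : Set ℝ, IsCompact K ∧ K ⊆ Set.Ioi 0 ∧ ν Kᶜ = 0

/-- `X_t` converges from the initial distribution `ν` to the quasistationary
distribution with `Γ`-density proportional to `φ`: `∫₀^∞ φ dΓ < ∞` and for every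
Borel `A ⊆ (0,∞)`, `P_ν(X_t ∈ A ∣ τ_∂ > t) → ∫_A φ dΓ / ∫₀^∞ φ dΓ`. -/
def ConvergesToQSD (b : ℝ → ℝ) (p : ℝ → ℝ → ℝ → ℝ) (ν : Measure ℝ) (φ : ℝ → ℝ) : Prop :=
  IntegrableOn (fun y => φ y * rho b y) (Set.Ioi 0) volume ∧
  ∀ A : Set ℝ, MeasurableSet A → A ⊆ Set.Ioi 0 →
    Tendsto (fun t => condProb b p ν t A) atTop
      (nhds (gInt b A φ / gInt b Set.univ φ))

/-- `X_t` escapes from `ν` to infinity: `P_ν(X_t ≤ z ∣ τ_∂ > t) → 0` for all `z > 0`. -/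
def Escapes (b : ℝ → ℝ) (p : ℝ → ℝ → ℝ → ℝ) (ν : Measure ℝ) : Prop :=
  ∀ z > (0:ℝ), Tendsto (fun t => condProb b p ν t (Set.Ioc 0 z)) atTop (nhds 0)

/-- The quadratic form `q^{κ,α}(g) = α g(0)² + (1/2)∫₀^∞ g′² ρ + ∫₀^∞ κ g² ρ`
(the term `α g(0)²` being dropped when `α = ∞`). -/
def qval (b κ : ℝ → ℝ) (α : ℝ≥0∞) (g : ℝ → ℝ) : ℝ :=
  (if α = ⊤ then 0 else α.toReal * (g 0) ^ 2)
    + (1 / 2) * ∫ y in Set.Ioi (0:ℝ), (deriv g y) ^ 2 * rho b y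
    + ∫ y in Set.Ioi (0:ℝ), κ y * (g y) ^ 2 * rho b y

/-- `μspec` is the spectral measure `d‖E^κ g‖²(λ)` of `g ∈ L²((0,∞),Γ)` for the
self-adjoint operator `L^{κ,α}`: supported in `[λ₀^κ,∞)`, of total mass `‖g‖²`,
and with Laplace transform `⟨e^{−tL^κ}g, g⟩ = ∫ e^{−tλ} d‖E^κ g‖²(λ)`. -/
structure IsSpectralMeasure (b κ : ℝ → ℝ) (α : ℝ≥0∞) (p : ℝ → ℝ → ℝ → ℝ)
    (g : ℝ → ℝ) (μspec : Measure ℝ) : Prop where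
  supp : ∀ s : ℝ, s < lam0 b κ α → μspec (Set.Iio s) = 0
  mass : μspec Set.univ = ENNReal.ofReal (gInt b Set.univ (fun x => (g x) ^ 2))
  laplace : ∀ t > (0:ℝ),
      gInt b Set.univ (fun x => (gInt b Set.univ (fun y => p t x y * g y)) * g x)
        = ∫ lam, Real.exp (-(t * lam)) ∂μspec

/-- `λ_g = sup{λ : ‖E^κ_λ g‖ = 0}`, the infimum of the support of the spectral
measure of `g`. -/
def lamOf (μspec : Measure ℝ) : ℝ := sSup {s : ℝ | μspec (Set.Iic s) = 0}

/-- The complexified Sturm–Liouville expression `τf = −(1/(2ρ))(ρ f′)′ + κ f`. -/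
def tauC (b κ : ℝ → ℝ) (f : ℝ → ℂ) (x : ℝ) : ℂ :=
  -(1 / (2 * (rho b x : ℂ))) * deriv (fun y => (rho b y : ℂ) * deriv f y) x
    + (κ x : ℂ) * f x

/-- `τ = −(1/(2ρ))(ρ·′)′ + κ` is in the limit-point case at `∞`: some solution of
`(τ − z)f = 0` fails to be square-integrable near `∞` with respect to `ρ(y)dy`. -/
def LimitPointAtInfty (b κ : ℝ → ℝ) : Prop :=
  ∃ z : ℂ, ∃ c > (0:ℝ), ∃ f : ℝ → ℂ,
    (∀ x ∈ Set.Ioi (0:ℝ), DifferentiableAt ℝ f x) ∧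
    (∀ x ∈ Set.Ioi (0:ℝ), DifferentiableAt ℝ (fun y => (rho b y : ℂ) * deriv f y) x) ∧
    (∀ x ∈ Set.Ioi (0:ℝ), tauC b κ f x = z * f x) ∧
    ¬ IntegrableOn (fun y => ‖f y‖ ^ 2 * rho b y) (Set.Ioi c) volume


/-!
Assume for contradiction that also `∫₀^∞ ρ = ∞`. Then `0` is an approximate eigenvalue of
`L^{0,α}`, so that `λ₀ ≤ 0`. If `ρ f' = u` and `u' = ρ v`, then `τ f = -v / 2`. A transition
of `f` from `0` to `1` ("step") is built by letting the flux `u` climb over a trapezoidal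
bump of `ρ`-mass `≥ 1`, stay constant over a gap where `∫ ρ⁻¹ ≥ 1` (recurrence), and come
back down over a second bump; such a step costs at most `2` in `∫ (τ f)² ρ`. The test
function goes up by one step, stays at `1` on a plateau of `ρ`-mass `≥ 2 / ε` (infinite speed
measure), and goes down by a second step, so `∫ (τ f)² ρ ≤ ε ∫ f² ρ`. Since it vanishes near
`0`, it satisfies every boundary condition.
-/

lemma continuous_of_continuousOn_Ioi_of_eq_zero {g : ℝ → ℝ} {a c : ℝ}
    (hg : ContinuousOn g (Ioi a)) (hac : a < c) (hzero : ∀ x ≤ c, g x = 0) :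
    Continuous g := by
  refine continuous_iff_continuousAt.mpr fun x => ?_
  rcases lt_or_ge x c with hx | hx
  · refine (continuousAt_const (y := (0:ℝ))).congr ?_
    filter_upwards [Iio_mem_nhds hx] with y hy using (hzero y hy.le).symm
  · exact hg.continuousAt (Ioi_mem_nhds (hac.trans_le hx))

lemma integrable_of_continuousOn_Ioi_of_eq_zero {g : ℝ → ℝ} {a c e : ℝ}
    (hg : ContinuousOn g (Ioi a)) (hac : a < c) (hleft : ∀ x ≤ c, g x = 0)
    (hright : ∀ x, e ≤ x → g x = 0) : Integrable g := by
  refine (continuous_of_continuousOn_Ioi_of_eq_zero hg hac hleft).integrable_of_hasCompactSupport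
    (HasCompactSupport.intro (isCompact_Icc (a := c) (b := e)) fun x hx => ?_)
  by_cases hxc : x ≤ c
  · exact hleft x hxc
  · exact hright x (by_contra fun h => hx ⟨(not_le.mp hxc).le, (not_le.mp h).le⟩)

lemma tendsto_setIntegral_Ioc_atTop {g : ℝ → ℝ} (hg : ContinuousOn g (Ioi 0))
    (hg0 : ∀ x, 0 ≤ g x) (h01 : IntegrableOn g (Ioc 0 1)) (hI : ¬ IntegrableOn g (Ioi 0))
    {a : ℝ} (ha : 0 < a) : Tendsto (fun t => ∫ x in Ioc a t, g x) atTop atTop := by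
  have hloc : ∀ {s t : ℝ}, 0 < s → IntegrableOn g (Ioc s t) :=
    fun hs => (hg.mono fun x hx => hs.trans_le hx.1).integrableOn_compact isCompact_Icc
      |>.mono_set Ioc_subset_Icc_self
  have hmono : Monotone fun t => ∫ x in Ioc a t, g x := fun s t hst =>
    setIntegral_mono_set (hloc ha) (Eventually.of_forall fun x => hg0 x)
      (Ioc_subset_Ioc_right hst).eventuallyLE
  refine tendsto_atTop_atTop_of_monotone hmono fun C => ?_
  by_contra! hC
  refine hI ?_
  have hIoi : IntegrableOn g (Ioi a) := by
    refine integrableOn_Ioi_of_intervalIntegral_norm_bounded C a (fun _ => hloc ha)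
      tendsto_id ?_
    filter_upwards [eventually_ge_atTop a] with t hat
    rw [id, intervalIntegral.integral_of_le hat]
    simpa [Real.norm_of_nonneg (hg0 _)] using (hC t).le
  have hIoc : IntegrableOn g (Ioc 0 a) := by
    rcases le_total a 1 with ha1 | ha1
    · exact h01.mono_set (Ioc_subset_Ioc_right ha1)
    · rw [← Ioc_union_Ioc_eq_Ioc zero_le_one ha1]
      exact h01.union (hloc one_pos)
  rw [← Ioc_union_Ioi_eq_Ioi ha.le]
  exact hIoc.union hIoi

lemma integral_Ioi_eq_intervalIntegral {g : ℝ → ℝ} {c e : ℝ} (hc : 0 ≤ c) (hce : c ≤ e)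
    (hleft : ∀ x ≤ c, g x = 0) (hright : ∀ x, e ≤ x → g x = 0) :
    ∫ x in Ioi 0, g x = ∫ x in (0:ℝ)..e, g x := by
  rw [intervalIntegral.integral_of_le (hc.trans hce),
    setIntegral_eq_integral_of_forall_compl_eq_zero (s := Ioi 0) fun x hx =>
      hleft x ((not_lt.mp hx).trans hc),
    setIntegral_eq_integral_of_forall_compl_eq_zero (s := Ioc 0 e) fun x hx => ?_]
  rcases le_or_gt x 0 with h | h
  · exact hleft x (h.trans hc)
  · exact hright x (not_le.mp fun h' => hx ⟨h, h'⟩).le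

lemma integral_sq_half_sub_le {s : Set ℝ} {w f g : ℝ → ℝ} (hw0 : ∀ x, 0 ≤ w x)
    (hf : IntegrableOn (fun x => f x ^ 2 * w x) s) (hg : IntegrableOn (fun x => g x ^ 2 * w x) s) :
    ∫ x in s, ((f x - g x) / 2) ^ 2 * w x ≤
      ((∫ x in s, f x ^ 2 * w x) + ∫ x in s, g x ^ 2 * w x) / 2 := by
  rw [← integral_add hf hg, ← integral_div]
  refine integral_mono_of_nonneg (Eventually.of_forall fun x => ?_) ((hf.add hg).div_const 2)
    (Eventually.of_forall fun x => ?_)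
  · exact mul_nonneg (sq_nonneg _) (hw0 x)
  · nlinarith [mul_nonneg (sq_nonneg (f x + g x)) (hw0 x)]

lemma sq_div_sub_le_add {A B H : ℝ} (hA : 0 ≤ A) (hA1 : A ≤ 1) (hB : 0 ≤ B) (hB1 : B ≤ 1)
    (hH : 1 ≤ H) : ((A - B) / H) ^ 2 ≤ A + B := by
  have h : ((A - B) / H) ^ 2 ≤ (A - B) ^ 2 := by
    rw [div_pow]
    exact div_le_self (sq_nonneg _) (one_le_pow₀ hH)
  nlinarith

def trapezoid (c e x : ℝ) : ℝ := max 0 (min 1 (min (x - c) (e - x)))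

section Trapezoid

variable {c e x : ℝ}

lemma continuous_trapezoid (c e : ℝ) : Continuous (trapezoid c e) := by
  unfold trapezoid; fun_prop

lemma trapezoid_nonneg : 0 ≤ trapezoid c e x := le_max_left _ _

lemma trapezoid_le_one : trapezoid c e x ≤ 1 := max_le zero_le_one (min_le_left _ _)

lemma trapezoid_of_le (hx : x ≤ c) : trapezoid c e x = 0 :=
  max_eq_left (min_le_of_right_le (min_le_of_left_le (by linarith)))

lemma trapezoid_of_ge (hx : e ≤ x) : trapezoid c e x = 0 :=
  max_eq_left (min_le_of_right_le (min_le_of_right_le (by linarith)))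

lemma trapezoid_eq_one (h₁ : c + 1 ≤ x) (h₂ : x ≤ e - 1) : trapezoid c e x = 1 := by
  rw [trapezoid, min_eq_left (le_min (by linarith) (by linarith)), max_eq_right zero_le_one]

end Trapezoid

def normPrimitive (g : ℝ → ℝ) (e x : ℝ) : ℝ :=
  (∫ t in (0:ℝ)..x, g t) / ∫ t in (0:ℝ)..e, g t

section NormPrimitive

variable {g : ℝ → ℝ} {c e x : ℝ}

lemma hasDerivAt_normPrimitive (hg : Continuous g) (e x : ℝ) :
    HasDerivAt (normPrimitive g e) (g x / ∫ t in (0:ℝ)..e, g t) x :=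
  (hg.integral_hasStrictDerivAt 0 x).hasDerivAt.div_const _

lemma normPrimitive_of_le (hc : 0 ≤ c) (hleft : ∀ x ≤ c, g x = 0) (hx : x ≤ c) :
    normPrimitive g e x = 0 := by
  rw [normPrimitive, intervalIntegral.integral_congr (g := fun _ => 0)
    fun t ht => hleft t (ht.2.trans (max_le hc hx)), intervalIntegral.integral_zero, zero_div]

lemma normPrimitive_of_ge (hg : Continuous g) (hright : ∀ x, e ≤ x → g x = 0)
    (hmass : ∫ t in (0:ℝ)..e, g t ≠ 0) (hx : e ≤ x) : normPrimitive g e x = 1 := by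
  rw [normPrimitive, ← intervalIntegral.integral_add_adjacent_intervals
    (hg.intervalIntegrable 0 e) (hg.intervalIntegrable e x),
    intervalIntegral.integral_congr (a := e) (g := fun _ => 0)
      fun t ht => hright t (by simpa [hx] using ht.1),
    intervalIntegral.integral_zero, add_zero, div_self hmass]

lemma monotone_normPrimitive (hg : Continuous g) (hg0 : ∀ x, 0 ≤ g x) (he : 0 ≤ e) :
    Monotone (normPrimitive g e) :=
  monotone_of_hasDerivAt_nonneg (hasDerivAt_normPrimitive hg e) fun x =>
    div_nonneg (hg0 x) (intervalIntegral.integral_nonneg he fun t _ => hg0 t)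

end NormPrimitive

structure HasFlux (w f u v : ℝ → ℝ) : Prop where
  hasDerivAt : ∀ x, HasDerivAt f (u x / w x) x
  hasDerivAt_flux : ∀ x, HasDerivAt u (w x * v x) x

lemma HasFlux.sub {w f₁ u₁ v₁ f₂ u₂ v₂ : ℝ → ℝ} (h₁ : HasFlux w f₁ u₁ v₁)
    (h₂ : HasFlux w f₂ u₂ v₂) : HasFlux w (f₁ - f₂) (u₁ - u₂) (v₁ - v₂) where
  hasDerivAt x := by
    simpa only [Pi.sub_apply, sub_div] using (h₁.hasDerivAt x).sub (h₂.hasDerivAt x)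
  hasDerivAt_flux x := by
    simpa only [Pi.sub_apply, mul_sub] using (h₁.hasDerivAt_flux x).sub (h₂.hasDerivAt_flux x)

def bumpMass (w : ℝ → ℝ) (c e : ℝ) : ℝ := ∫ t in (0:ℝ)..e, w t * trapezoid c e t

def bumpCDF (w : ℝ → ℝ) (c e : ℝ) : ℝ → ℝ :=
  normPrimitive (fun t => w t * trapezoid c e t) e

section Bump

variable {w : ℝ → ℝ} {c e x : ℝ}

lemma continuous_mul_trapezoid (hw : ContinuousOn w (Ioi 0)) (hc : 0 < c) :
    Continuous fun t => w t * trapezoid c e t :=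
  continuous_of_continuousOn_Ioi_of_eq_zero (hw.mul (continuous_trapezoid c e).continuousOn) hc
    fun x hx => by rw [trapezoid_of_le hx, mul_zero]

lemma hasDerivAt_bumpCDF (hw : ContinuousOn w (Ioi 0)) (hc : 0 < c) (x : ℝ) :
    HasDerivAt (bumpCDF w c e) (w x * trapezoid c e x / bumpMass w c e) x :=
  hasDerivAt_normPrimitive (continuous_mul_trapezoid hw hc) e x

lemma bumpCDF_of_le (hc : 0 ≤ c) (hx : x ≤ c) : bumpCDF w c e x = 0 :=
  normPrimitive_of_le hc (fun y hy => by rw [trapezoid_of_le hy, mul_zero]) hx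

lemma bumpCDF_of_ge (hw : ContinuousOn w (Ioi 0)) (hc : 0 < c) (hmass : bumpMass w c e ≠ 0)
    (hx : e ≤ x) : bumpCDF w c e x = 1 :=
  normPrimitive_of_ge (continuous_mul_trapezoid hw hc)
    (fun y hy => by rw [trapezoid_of_ge hy, mul_zero]) hmass hx

lemma monotone_bumpCDF (hw : ContinuousOn w (Ioi 0)) (hw0 : ∀ x, 0 ≤ w x) (hc : 0 < c)
    (hce : c ≤ e) : Monotone (bumpCDF w c e) :=
  monotone_normPrimitive (continuous_mul_trapezoid hw hc)
    (fun x => mul_nonneg (hw0 x) trapezoid_nonneg) (hc.le.trans hce)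

lemma bumpCDF_nonneg (hw : ContinuousOn w (Ioi 0)) (hw0 : ∀ x, 0 ≤ w x) (hc : 0 < c)
    (hce : c ≤ e) : 0 ≤ bumpCDF w c e x := by
  rcases le_total x c with hx | hx
  · rw [bumpCDF_of_le hc.le hx]
  · simpa [bumpCDF_of_le hc.le le_rfl] using monotone_bumpCDF hw hw0 hc hce hx

lemma bumpCDF_le_one (hw : ContinuousOn w (Ioi 0)) (hw0 : ∀ x, 0 ≤ w x) (hc : 0 < c)
    (hce : c ≤ e) (hmass : bumpMass w c e ≠ 0) : bumpCDF w c e x ≤ 1 := by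
  simpa [bumpCDF_of_ge hw hc hmass (le_max_right x e)] using
    monotone_bumpCDF hw hw0 hc hce (le_max_left x e)

lemma setIntegral_Ioc_le_bumpMass (hw : ContinuousOn w (Ioi 0)) (hw0 : ∀ x, 0 ≤ w x)
    (hc : 0 < c) (hce : c + 1 ≤ e - 1) : ∫ x in Ioc (c + 1) (e - 1), w x ≤ bumpMass w c e := by
  rw [bumpMass, intervalIntegral.integral_of_le (by linarith)]
  calc ∫ x in Ioc (c + 1) (e - 1), w x
      = ∫ x in Ioc (c + 1) (e - 1), w x * trapezoid c e x :=
        setIntegral_congr_fun measurableSet_Ioc fun x hx => by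
          rw [trapezoid_eq_one hx.1.le hx.2, mul_one]
    _ ≤ ∫ x in Ioc 0 e, w x * trapezoid c e x :=
        setIntegral_mono_set (continuous_mul_trapezoid hw hc).integrableOn_Ioc
          (Eventually.of_forall fun x => mul_nonneg (hw0 x) trapezoid_nonneg)
          (Ioc_subset_Ioc (by linarith) (by linarith)).eventuallyLE

lemma integrable_mul_trapezoid (hw : ContinuousOn w (Ioi 0)) (hc : 0 < c) :
    Integrable fun t => w t * trapezoid c e t :=
  integrable_of_continuousOn_Ioi_of_eq_zero (continuous_mul_trapezoid hw hc).continuousOn hc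
    (fun x hx => by rw [trapezoid_of_le hx, mul_zero])
    fun x hx => by rw [trapezoid_of_ge hx, mul_zero]

lemma integral_Ioi_mul_trapezoid (hc : 0 ≤ c) (hce : c ≤ e) :
    ∫ x in Ioi 0, w x * trapezoid c e x = bumpMass w c e :=
  integral_Ioi_eq_intervalIntegral hc hce (fun x hx => by rw [trapezoid_of_le hx, mul_zero])
    fun x hx => by rw [trapezoid_of_ge hx, mul_zero]

end Bump

def stepFlux (w : ℝ → ℝ) (c₁ e₁ c₂ e₂ x : ℝ) : ℝ := bumpCDF w c₁ e₁ x - bumpCDF w c₂ e₂ x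

def stepHeight (w : ℝ → ℝ) (c₁ e₁ c₂ e₂ : ℝ) : ℝ :=
  ∫ t in (0:ℝ)..e₂, stepFlux w c₁ e₁ c₂ e₂ t / w t

def step (w : ℝ → ℝ) (c₁ e₁ c₂ e₂ : ℝ) : ℝ → ℝ :=
  normPrimitive (fun t => stepFlux w c₁ e₁ c₂ e₂ t / w t) e₂

def stepDensity (w : ℝ → ℝ) (c₁ e₁ c₂ e₂ x : ℝ) : ℝ :=
  (trapezoid c₁ e₁ x / bumpMass w c₁ e₁ - trapezoid c₂ e₂ x / bumpMass w c₂ e₂) /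
    stepHeight w c₁ e₁ c₂ e₂

lemma continuous_stepDensity (w : ℝ → ℝ) (c₁ e₁ c₂ e₂ : ℝ) :
    Continuous (stepDensity w c₁ e₁ c₂ e₂) := by
  have := continuous_trapezoid c₁ e₁
  have := continuous_trapezoid c₂ e₂
  unfold stepDensity
  fun_prop

/-- The flux of `step` climbs to `1` over `[c₁, e₁]`, stays there over the gap `[e₁, c₂]`, and
falls back to `0` over `[c₂, e₂]`. -/
structure IsStepProfile (w : ℝ → ℝ) (c₁ e₁ c₂ e₂ : ℝ) : Prop where
  pos : 0 < c₁
  le₁ : c₁ ≤ e₁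
  le_gap : e₁ ≤ c₂
  le₂ : c₂ ≤ e₂
  one_le_mass₁ : 1 ≤ bumpMass w c₁ e₁
  one_le_mass₂ : 1 ≤ bumpMass w c₂ e₂
  one_le_gap : 1 ≤ ∫ x in Ioc e₁ c₂, (w x)⁻¹

namespace IsStepProfile

variable {w : ℝ → ℝ} {c₁ e₁ c₂ e₂ x : ℝ}

lemma le_mid (hs : IsStepProfile w c₁ e₁ c₂ e₂) : c₁ ≤ c₂ := hs.le₁.trans hs.le_gap

lemma pos₂ (hs : IsStepProfile w c₁ e₁ c₂ e₂) : 0 < c₂ := hs.pos.trans_le hs.le_mid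

lemma le_e₂ (hs : IsStepProfile w c₁ e₁ c₂ e₂) : c₁ ≤ e₂ := hs.le_mid.trans hs.le₂

lemma stepFlux_of_le (hs : IsStepProfile w c₁ e₁ c₂ e₂) (hx : x ≤ c₁) :
    stepFlux w c₁ e₁ c₂ e₂ x = 0 := by
  rw [stepFlux, bumpCDF_of_le hs.pos.le hx,
    bumpCDF_of_le hs.pos₂.le (hx.trans hs.le_mid), sub_zero]

lemma stepFlux_of_ge (hs : IsStepProfile w c₁ e₁ c₂ e₂) (hw : ContinuousOn w (Ioi 0))
    (hx : e₂ ≤ x) : stepFlux w c₁ e₁ c₂ e₂ x = 0 := by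
  rw [stepFlux, bumpCDF_of_ge hw hs.pos (by linarith [hs.one_le_mass₁])
      ((hs.le_gap.trans hs.le₂).trans hx),
    bumpCDF_of_ge hw hs.pos₂ (by linarith [hs.one_le_mass₂]) hx, sub_self]

lemma stepFlux_eq_one (hs : IsStepProfile w c₁ e₁ c₂ e₂) (hw : ContinuousOn w (Ioi 0))
    (h₁ : e₁ ≤ x) (h₂ : x ≤ c₂) : stepFlux w c₁ e₁ c₂ e₂ x = 1 := by
  rw [stepFlux, bumpCDF_of_ge hw hs.pos (by linarith [hs.one_le_mass₁]) h₁,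
    bumpCDF_of_le hs.pos₂.le h₂, sub_zero]

lemma stepFlux_nonneg (hs : IsStepProfile w c₁ e₁ c₂ e₂) (hw : ContinuousOn w (Ioi 0))
    (hw0 : ∀ x, 0 ≤ w x) : 0 ≤ stepFlux w c₁ e₁ c₂ e₂ x := by
  rw [stepFlux, sub_nonneg]
  rcases le_total x c₂ with hx | hx
  · rw [bumpCDF_of_le hs.pos₂.le hx]
    exact bumpCDF_nonneg hw hw0 hs.pos hs.le₁
  · rw [bumpCDF_of_ge hw hs.pos (by linarith [hs.one_le_mass₁]) (hs.le_gap.trans hx)]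
    exact bumpCDF_le_one hw hw0 hs.pos₂ hs.le₂ (by linarith [hs.one_le_mass₂])

lemma hasDerivAt_stepFlux (hs : IsStepProfile w c₁ e₁ c₂ e₂) (hw : ContinuousOn w (Ioi 0))
    (x : ℝ) : HasDerivAt (stepFlux w c₁ e₁ c₂ e₂) (w x * trapezoid c₁ e₁ x / bumpMass w c₁ e₁ -
      w x * trapezoid c₂ e₂ x / bumpMass w c₂ e₂) x :=
  (hasDerivAt_bumpCDF hw hs.pos x).sub (hasDerivAt_bumpCDF hw hs.pos₂ x)

lemma continuous_stepFlux_div (hs : IsStepProfile w c₁ e₁ c₂ e₂) (hw : ContinuousOn w (Ioi 0))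
    (hw0 : ∀ x, 0 < w x) : Continuous fun t => stepFlux w c₁ e₁ c₂ e₂ t / w t := by
  have hflux : Continuous (stepFlux w c₁ e₁ c₂ e₂) :=
    continuous_iff_continuousAt.mpr fun x => (hs.hasDerivAt_stepFlux hw x).continuousAt
  exact continuous_of_continuousOn_Ioi_of_eq_zero
    (hflux.continuousOn.div hw fun x _ => (hw0 x).ne') hs.pos
    fun x hx => by rw [hs.stepFlux_of_le hx, zero_div]

lemma one_le_stepHeight (hs : IsStepProfile w c₁ e₁ c₂ e₂) (hw : ContinuousOn w (Ioi 0))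
    (hw0 : ∀ x, 0 < w x) : 1 ≤ stepHeight w c₁ e₁ c₂ e₂ := by
  rw [stepHeight, intervalIntegral.integral_of_le (hs.pos₂.le.trans hs.le₂)]
  calc 1 ≤ ∫ x in Ioc e₁ c₂, (w x)⁻¹ := hs.one_le_gap
    _ = ∫ x in Ioc e₁ c₂, stepFlux w c₁ e₁ c₂ e₂ x / w x :=
        setIntegral_congr_fun measurableSet_Ioc fun x hx => by
          rw [hs.stepFlux_eq_one hw hx.1.le hx.2, one_div]
    _ ≤ ∫ x in Ioc 0 e₂, stepFlux w c₁ e₁ c₂ e₂ x / w x :=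
        setIntegral_mono_set (hs.continuous_stepFlux_div hw hw0).integrableOn_Ioc
          (Eventually.of_forall fun x =>
            div_nonneg (hs.stepFlux_nonneg hw fun y => (hw0 y).le) (hw0 x).le)
          (Ioc_subset_Ioc (hs.pos.le.trans hs.le₁) hs.le₂).eventuallyLE

lemma step_of_le (hs : IsStepProfile w c₁ e₁ c₂ e₂) (hx : x ≤ c₁) :
    step w c₁ e₁ c₂ e₂ x = 0 :=
  normPrimitive_of_le hs.pos.le (fun y hy => by rw [hs.stepFlux_of_le hy, zero_div]) hx

lemma step_of_ge (hs : IsStepProfile w c₁ e₁ c₂ e₂) (hw : ContinuousOn w (Ioi 0))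
    (hw0 : ∀ x, 0 < w x) (hx : e₂ ≤ x) : step w c₁ e₁ c₂ e₂ x = 1 :=
  normPrimitive_of_ge (hs.continuous_stepFlux_div hw hw0)
    (fun y hy => by rw [hs.stepFlux_of_ge hw hy, zero_div])
    (zero_lt_one.trans_le (hs.one_le_stepHeight hw hw0)).ne' hx

lemma hasFlux_step (hs : IsStepProfile w c₁ e₁ c₂ e₂) (hw : ContinuousOn w (Ioi 0))
    (hw0 : ∀ x, 0 < w x) :
    HasFlux w (step w c₁ e₁ c₂ e₂)
      (fun x => stepFlux w c₁ e₁ c₂ e₂ x / stepHeight w c₁ e₁ c₂ e₂)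
      (stepDensity w c₁ e₁ c₂ e₂) where
  hasDerivAt x := by
    have h := hasDerivAt_normPrimitive (hs.continuous_stepFlux_div hw hw0) e₂ x
    rwa [div_right_comm] at h
  hasDerivAt_flux x := by
    refine ((hs.hasDerivAt_stepFlux hw x).div_const _).congr_deriv ?_
    rw [stepDensity]
    ring

lemma stepDensity_of_le (hs : IsStepProfile w c₁ e₁ c₂ e₂) (hx : x ≤ c₁) :
    stepDensity w c₁ e₁ c₂ e₂ x = 0 := by
  rw [stepDensity, trapezoid_of_le hx, trapezoid_of_le (hx.trans hs.le_mid)]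
  simp

lemma stepDensity_of_ge (hs : IsStepProfile w c₁ e₁ c₂ e₂) (hx : e₂ ≤ x) :
    stepDensity w c₁ e₁ c₂ e₂ x = 0 := by
  rw [stepDensity, trapezoid_of_ge hx, trapezoid_of_ge ((hs.le_gap.trans hs.le₂).trans hx)]
  simp

lemma integrable_sq_stepDensity_mul (hs : IsStepProfile w c₁ e₁ c₂ e₂)
    (hw : ContinuousOn w (Ioi 0)) : Integrable fun x => stepDensity w c₁ e₁ c₂ e₂ x ^ 2 * w x :=
  integrable_of_continuousOn_Ioi_of_eq_zero (e := e₂)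
    (((continuous_stepDensity w c₁ e₁ c₂ e₂).pow 2).continuousOn.mul hw) hs.pos
    (fun x hx => by simp [hs.stepDensity_of_le hx])
    fun x hx => by simp [hs.stepDensity_of_ge hx]

lemma integral_sq_stepDensity_le (hs : IsStepProfile w c₁ e₁ c₂ e₂)
    (hw : ContinuousOn w (Ioi 0)) (hw0 : ∀ x, 0 < w x) :
    ∫ x in Ioi 0, stepDensity w c₁ e₁ c₂ e₂ x ^ 2 * w x ≤ 2 := by
  have hμ₁ := hs.one_le_mass₁
  have hμ₂ := hs.one_le_mass₂
  have hunit : ∀ {c e : ℝ}, 1 ≤ bumpMass w c e → ∀ x,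
      0 ≤ trapezoid c e x / bumpMass w c e ∧ trapezoid c e x / bumpMass w c e ≤ 1 :=
    fun hμ _ => ⟨div_nonneg trapezoid_nonneg (by linarith),
      div_le_one_of_le₀ (trapezoid_le_one.trans hμ) (by linarith)⟩
  have hbumps : Integrable fun x => w x * trapezoid c₁ e₁ x / bumpMass w c₁ e₁ +
      w x * trapezoid c₂ e₂ x / bumpMass w c₂ e₂ :=
    ((integrable_mul_trapezoid hw hs.pos).div_const _).add
      ((integrable_mul_trapezoid hw hs.pos₂).div_const _)
  have hpointwise : ∀ x, stepDensity w c₁ e₁ c₂ e₂ x ^ 2 * w x ≤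
      w x * trapezoid c₁ e₁ x / bumpMass w c₁ e₁ +
        w x * trapezoid c₂ e₂ x / bumpMass w c₂ e₂ := by
    intro x
    have h := mul_le_mul_of_nonneg_right (sq_div_sub_le_add (hunit hμ₁ x).1 (hunit hμ₁ x).2
      (hunit hμ₂ x).1 (hunit hμ₂ x).2 (hs.one_le_stepHeight hw hw0)) (hw0 x).le
    rw [stepDensity]
    exact h.trans_eq (by ring)
  calc ∫ x in Ioi 0, stepDensity w c₁ e₁ c₂ e₂ x ^ 2 * w x
      ≤ ∫ x in Ioi 0, (w x * trapezoid c₁ e₁ x / bumpMass w c₁ e₁ +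
          w x * trapezoid c₂ e₂ x / bumpMass w c₂ e₂) :=
        setIntegral_mono (hs.integrable_sq_stepDensity_mul hw).integrableOn
          hbumps.integrableOn hpointwise
    _ = 2 := by
        rw [integral_add ((integrable_mul_trapezoid hw hs.pos).div_const _).integrableOn
            ((integrable_mul_trapezoid hw hs.pos₂).div_const _).integrableOn,
          integral_div, integral_div, integral_Ioi_mul_trapezoid hs.pos.le hs.le₁,
          integral_Ioi_mul_trapezoid hs.pos₂.le hs.le₂, div_self (by linarith),
          div_self (by linarith)]
        norm_num

end IsStepProfile

section StepExistence

variable {w : ℝ → ℝ}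

lemma exists_one_le_bumpMass (hw : ContinuousOn w (Ioi 0)) (hw0 : ∀ x, 0 ≤ w x)
    (hmass : ∀ a > 0, Tendsto (fun t => ∫ x in Ioc a t, w x) atTop atTop) {c : ℝ} (hc : 0 < c) :
    ∃ e, c ≤ e ∧ 1 ≤ bumpMass w c e := by
  obtain ⟨t, hmt, ht⟩ := ((hmass (c + 1) (by linarith)).eventually_ge_atTop 1).and
    (eventually_gt_atTop (c + 1)) |>.exists
  refine ⟨t + 1, by linarith, hmt.trans ?_⟩
  simpa using setIntegral_Ioc_le_bumpMass (e := t + 1) hw hw0 hc (by linarith)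

lemma exists_isStepProfile (hw : ContinuousOn w (Ioi 0)) (hw0 : ∀ x, 0 ≤ w x)
    (hmass : ∀ a > 0, Tendsto (fun t => ∫ x in Ioc a t, w x) atTop atTop)
    (hmassInv : ∀ a > 0, Tendsto (fun t => ∫ x in Ioc a t, (w x)⁻¹) atTop atTop)
    {a : ℝ} (ha : 0 < a) : ∃ e₁ c₂ e₂, IsStepProfile w a e₁ c₂ e₂ := by
  obtain ⟨e₁, hae₁, hμ₁⟩ := exists_one_le_bumpMass hw hw0 hmass ha
  obtain ⟨c₂, hgap, he₁c₂⟩ := ((hmassInv e₁ (by linarith)).eventually_ge_atTop 1).and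
    (eventually_gt_atTop e₁) |>.exists
  obtain ⟨e₂, hc₂e₂, hμ₂⟩ := exists_one_le_bumpMass hw hw0 hmass (c := c₂) (by linarith)
  exact ⟨e₁, c₂, e₂, ha, hae₁, he₁c₂.le, hc₂e₂, hμ₁, hμ₂, hgap⟩

end StepExistence

lemma rho_pos (b : ℝ → ℝ) (x : ℝ) : 0 < rho b x := Real.exp_pos _

lemma continuousOn_rho {b : ℝ → ℝ} (hb : LocallyIntegrableOn b (Ici 0)) :
    ContinuousOn (rho b) (Ioi 0) := by
  intro x hx
  have hIcc : uIcc 0 (x + 1) = Icc 0 (x + 1) := uIcc_of_le (by linarith [mem_Ioi.mp hx])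
  have hprim := intervalIntegral.continuousOn_primitive_interval (μ := volume)
    (hb.integrableOn_compact_subset (hIcc ▸ Icc_subset_Ici_self) isCompact_uIcc)
  rw [hIcc] at hprim
  have hat : ContinuousAt (fun y => ∫ s in (0:ℝ)..y, b s) x :=
    hprim.continuousAt (Icc_mem_nhds hx (by linarith))
  exact (hat.const_mul 2).rexp.continuousWithinAt

lemma gInt_univ (b f : ℝ → ℝ) : gInt b univ f = ∫ x in Ioi 0, f x * rho b x := by
  rw [gInt, univ_inter]

lemma tau_const_mul (b κ f : ℝ → ℝ) (c x : ℝ) :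
    tau b κ (fun y => c * f y) x = c * tau b κ f x := by
  have hflux : (fun y => rho b y * deriv (fun z => c * f z) y) =
      fun y => c * (rho b y * deriv f y) := by
    funext y
    rw [deriv_const_mul_field]
    ring
  rw [tau, tau, hflux, deriv_const_mul_field]
  ring

lemma MemDomain.const_mul {b κ f : ℝ → ℝ} {α : ℝ≥0∞} (h : MemDomain b κ α f) (c : ℝ) :
    MemDomain b κ α (fun y => c * f y) where
  diff1 x hx := (h.diff1 x hx).const_mul c
  diff2 x hx := by
    simpa only [deriv_const_mul_field', mul_left_comm (rho b _)] using (h.diff2 x hx).const_mul c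
  memL2 := by simpa only [IntegrableOn, mul_pow, mul_assoc] using h.memL2.const_mul (c ^ 2)
  tau_memL2 := by
    simpa only [IntegrableOn, tau_const_mul, mul_pow, mul_assoc] using h.tau_memL2.const_mul (c ^ 2)
  bc := ⟨fun hα => by simp [h.bc.1 hα], fun hα => by
    rw [deriv_const_mul_field, h.bc.2 hα]
    ring⟩

lemma HasFlux.rho_mul_deriv {b f u v : ℝ → ℝ} (h : HasFlux (rho b) f u v) :
    (fun y => rho b y * deriv f y) = u := by
  funext y
  rw [(h.hasDerivAt y).deriv, mul_div_cancel₀ _ (rho_pos b y).ne']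

lemma HasFlux.tau_eq {b κ f u v : ℝ → ℝ} (h : HasFlux (rho b) f u v) (x : ℝ) :
    tau b κ f x = -(v x / 2) + κ x * f x := by
  rw [tau, h.rho_mul_deriv, (h.hasDerivAt_flux x).deriv]
  field_simp [(rho_pos b x).ne']

lemma inSpectrum_of_forall_exists_memDomain {b κ : ℝ → ℝ} {α : ℝ≥0∞} {μ : ℝ}
    (h : ∀ ε > 0, ∃ f, MemDomain b κ α f ∧ 0 < gInt b univ (fun x => f x ^ 2) ∧
      gInt b univ (fun x => (tau b κ f x - μ * f x) ^ 2) ≤ ε * gInt b univ (fun x => f x ^ 2)) :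
    InSpectrum b κ α μ := by
  choose f hdom hpos hle using fun n : ℕ => h (1 / (n + 1)) (by positivity)
  have hscale : ∀ (c : ℝ) (F : ℝ → ℝ),
      gInt b univ (fun x => (c * F x) ^ 2) = c ^ 2 * gInt b univ (fun x => F x ^ 2) := by
    intro c F
    simp only [gInt, mul_pow, mul_assoc, integral_const_mul]
  set c : ℕ → ℝ := fun n => (Real.sqrt (gInt b univ fun x => f n x ^ 2))⁻¹
  have hc : ∀ n, c n ^ 2 * gInt b univ (fun x => f n x ^ 2) = 1 := fun n => by
    rw [inv_pow, Real.sq_sqrt (hpos n).le, inv_mul_cancel₀ (hpos n).ne']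
  refine ⟨fun n x => c n * f n x, fun n => (hdom n).const_mul (c n), fun n => by rw [hscale, hc],
    squeeze_zero (fun n => ?_) (fun n => ?_) tendsto_one_div_add_atTop_nhds_zero_nat⟩
  · rw [gInt_univ]
    exact setIntegral_nonneg measurableSet_Ioi fun x _ => mul_nonneg (sq_nonneg _) (rho_pos b x).le
  · have hτ : (fun x => (tau b κ (fun y => c n * f n y) x - μ * (c n * f n x)) ^ 2) =
        fun x => (c n * (tau b κ (f n) x - μ * f n x)) ^ 2 := by
      funext x
      rw [tau_const_mul]
      ring
    rw [hτ, hscale]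
    calc c n ^ 2 * gInt b univ (fun x => (tau b κ (f n) x - μ * f n x) ^ 2)
        ≤ c n ^ 2 * (1 / (n + 1) * gInt b univ (fun x => f n x ^ 2)) :=
          mul_le_mul_of_nonneg_left (hle n) (sq_nonneg _)
      _ = 1 / (n + 1) := by rw [mul_left_comm, hc, mul_one]

/-- `lam0` is an `sInf` in `ℝ`, which is `0` when the spectrum is not bounded below. -/
lemma lam0_le_of_inSpectrum {b κ : ℝ → ℝ} {α : ℝ≥0∞} {μ : ℝ} (hμ : InSpectrum b κ α μ)
    (hμ0 : 0 ≤ μ) : lam0 b κ α ≤ μ := by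
  by_cases hbdd : BddBelow {μ | InSpectrum b κ α μ}
  · exact csInf_le hbdd hμ
  · rw [lam0, Real.sInf_of_not_bddBelow hbdd]
    exact hμ0

lemma memDomain_of_hasFlux {b f u v : ℝ → ℝ} {α : ℝ≥0∞} {a e : ℝ}
    (hρ : ContinuousOn (rho b) (Ioi 0)) (h : HasFlux (rho b) f u v) (hv : Continuous v)
    (ha : 0 < a) (hleft : ∀ x ≤ a, f x = 0 ∧ v x = 0) (hright : ∀ x, e ≤ x → f x = 0 ∧ v x = 0) :
    MemDomain b (fun _ => 0) α f := by
  have hf : Continuous f := continuous_iff_continuousAt.mpr fun x => (h.hasDerivAt x).continuousAt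
  have hf0 : f =ᶠ[𝓝 0] fun _ => 0 := by
    filter_upwards [Iio_mem_nhds ha] with y hy using (hleft y hy.le).1
  have htau : (fun x => tau b (fun _ => 0) f x ^ 2 * rho b x) =
      fun x => (v x / 2) ^ 2 * rho b x := by
    funext x
    rw [h.tau_eq]
    ring
  refine ⟨fun x _ => (h.hasDerivAt x).differentiableAt, fun x _ => ?_, ?_, ?_, ?_, ?_⟩
  · rw [h.rho_mul_deriv]
    exact (h.hasDerivAt_flux x).differentiableAt
  · exact (integrable_of_continuousOn_Ioi_of_eq_zero (g := fun x => f x ^ 2 * rho b x) (e := e)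
      ((hf.pow 2).continuousOn.mul hρ) ha (fun x hx => by simp [(hleft x hx).1])
      fun x hx => by simp [(hright x hx).1]).integrableOn
  · rw [htau]
    exact (integrable_of_continuousOn_Ioi_of_eq_zero (g := fun x => (v x / 2) ^ 2 * rho b x)
      (e := e) (((hv.div_const 2).pow 2).continuousOn.mul hρ) ha
      (fun x hx => by simp [(hleft x hx).2]) fun x hx => by simp [(hright x hx).2]).integrableOn
  · exact fun _ => hf0.eq_of_nhds
  · intro _
    rw [hf0.deriv_eq, deriv_const, hf0.eq_of_nhds, mul_zero]

section TwoSteps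

variable {b : ℝ → ℝ} {c₁ e₁ c₂ e₂ c₁' e₁' c₂' e₂' : ℝ}

lemma memDomain_step_sub_step {α : ℝ≥0∞} (hρ : ContinuousOn (rho b) (Ioi 0))
    (hs : IsStepProfile (rho b) c₁ e₁ c₂ e₂) (hs' : IsStepProfile (rho b) c₁' e₁' c₂' e₂')
    (h : e₂ ≤ c₁') :
    MemDomain b (fun _ => 0) α (step (rho b) c₁ e₁ c₂ e₂ - step (rho b) c₁' e₁' c₂' e₂') := by
  have hc : c₁ ≤ c₁' := hs.le_e₂.trans h
  refine memDomain_of_hasFlux hρ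
    ((hs.hasFlux_step hρ (rho_pos b)).sub (hs'.hasFlux_step hρ (rho_pos b)))
    ((continuous_stepDensity _ _ _ _ _).sub (continuous_stepDensity _ _ _ _ _)) hs.pos
    (fun x hx => ?_) (e := e₂') fun x hx => ?_
  · simp [hs.step_of_le hx, hs'.step_of_le (hx.trans hc), hs.stepDensity_of_le hx,
      hs'.stepDensity_of_le (hx.trans hc)]
  · have hx' : e₂ ≤ x := h.trans (hs'.le_e₂.trans hx)
    simp [hs.step_of_ge hρ (rho_pos b) hx', hs'.step_of_ge hρ (rho_pos b) hx,
      hs.stepDensity_of_ge hx', hs'.stepDensity_of_ge hx]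

lemma gInt_sq_tau_step_sub_step_le (hρ : ContinuousOn (rho b) (Ioi 0))
    (hs : IsStepProfile (rho b) c₁ e₁ c₂ e₂) (hs' : IsStepProfile (rho b) c₁' e₁' c₂' e₂') :
    gInt b univ (fun x =>
      tau b (fun _ => 0) (step (rho b) c₁ e₁ c₂ e₂ - step (rho b) c₁' e₁' c₂' e₂') x ^ 2) ≤ 2 := by
  have hflux := (hs.hasFlux_step hρ (rho_pos b)).sub (hs'.hasFlux_step hρ (rho_pos b))
  rw [gInt_univ, setIntegral_congr_fun measurableSet_Ioi fun x _ => by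
    rw [hflux.tau_eq, Pi.sub_apply, zero_mul, add_zero, neg_sq]]
  refine (integral_sq_half_sub_le (fun x => (rho_pos b x).le)
    (hs.integrable_sq_stepDensity_mul hρ).integrableOn
    (hs'.integrable_sq_stepDensity_mul hρ).integrableOn).trans ?_
  linarith [hs.integral_sq_stepDensity_le hρ (rho_pos b),
    hs'.integral_sq_stepDensity_le hρ (rho_pos b)]

end TwoSteps

lemma exists_memDomain_sq_tau_le {b : ℝ → ℝ} {α : ℝ≥0∞} (hρ : ContinuousOn (rho b) (Ioi 0))
    (hmass : ∀ a > 0, Tendsto (fun t => ∫ x in Ioc a t, rho b x) atTop atTop)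
    (hmassInv : ∀ a > 0, Tendsto (fun t => ∫ x in Ioc a t, (rho b x)⁻¹) atTop atTop)
    {ε : ℝ} (hε : 0 < ε) :
    ∃ f, MemDomain b (fun _ => 0) α f ∧ 0 < gInt b univ (fun x => f x ^ 2) ∧
      gInt b univ (fun x => (tau b (fun _ => 0) f x - 0 * f x) ^ 2) ≤
        ε * gInt b univ (fun x => f x ^ 2) := by
  have hρ0 : ∀ x, 0 ≤ rho b x := fun x => (rho_pos b x).le
  obtain ⟨e₁, c₂, e₂, hs⟩ := exists_isStepProfile hρ hρ0 hmass hmassInv one_pos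
  obtain ⟨t, hplateau, het⟩ := ((hmass e₂ (by linarith [hs.le_e₂])).eventually_ge_atTop
    (2 / ε)).and (eventually_gt_atTop e₂) |>.exists
  obtain ⟨e₁', c₂', e₂', hs'⟩ :=
    exists_isStepProfile hρ hρ0 hmass hmassInv (a := t) (by linarith [hs.le_e₂])
  set f := step (rho b) 1 e₁ c₂ e₂ - step (rho b) t e₁' c₂' e₂'
  have hdom : MemDomain b (fun _ => 0) α f := memDomain_step_sub_step hρ hs hs' het.le
  have hnorm : 2 / ε ≤ gInt b univ (fun x => f x ^ 2) := by
    rw [gInt_univ]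
    calc 2 / ε ≤ ∫ x in Ioc e₂ t, rho b x := hplateau
      _ = ∫ x in Ioc e₂ t, f x ^ 2 * rho b x :=
          setIntegral_congr_fun measurableSet_Ioc fun x hx => by
            simp [f, hs.step_of_ge hρ (rho_pos b) hx.1.le, hs'.step_of_le hx.2]
      _ ≤ ∫ x in Ioi 0, f x ^ 2 * rho b x :=
          setIntegral_mono_set hdom.memL2
            (Eventually.of_forall fun x => mul_nonneg (sq_nonneg _) (hρ0 x))
            (Ioc_subset_Ioi_self.trans (Ioi_subset_Ioi (by linarith [hs.le_e₂]))).eventuallyLE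
  refine ⟨f, hdom, (div_pos two_pos hε).trans_le hnorm, ?_⟩
  calc gInt b univ (fun x => (tau b (fun _ => 0) f x - 0 * f x) ^ 2)
      ≤ 2 := by simpa only [zero_mul, sub_zero] using gInt_sq_tau_step_sub_step_le hρ hs hs'
    _ = ε * (2 / ε) := by field_simp
    _ ≤ ε * gInt b univ (fun x => f x ^ 2) := mul_le_mul_of_nonneg_left hnorm hε.le

theorem positive_lam0_recurrent_implies_finite_speed_general
    (b : ℝ → ℝ) (α : ℝ≥0∞)
    (hc : Coeffs b (fun _ => 0)) (h0 : RegularZero b)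
    (hlam : 0 < lam0 b (fun _ => 0) α)
    (hrec : Recurrent b) :
    IntegrableOn (fun x => rho b x) (Set.Ioi 0) volume := by
  by_contra hspeed
  have hρ := continuousOn_rho hc.hb_loc
  have hmass : ∀ a > 0, Tendsto (fun t => ∫ x in Ioc a t, rho b x) atTop atTop :=
    fun a ha => tendsto_setIntegral_Ioc_atTop hρ (fun x => (rho_pos b x).le) h0.1 hspeed ha
  have hmassInv : ∀ a > 0, Tendsto (fun t => ∫ x in Ioc a t, (rho b x)⁻¹) atTop atTop :=
    fun a ha => tendsto_setIntegral_Ioc_atTop (hρ.inv₀ fun x _ => (rho_pos b x).ne')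
      (fun x => (inv_pos.mpr (rho_pos b x)).le) h0.2 hrec ha
  have hzero : InSpectrum b (fun _ => 0) α 0 :=
    inSpectrum_of_forall_exists_memDomain fun _ hε =>
      exists_memDomain_sq_tau_le hρ hmass hmassInv hε
  exact hlam.not_ge (lam0_le_of_inSpectrum hzero le_rfl)

/-- Lemma `spectrum`, assertion (2): if `λ₀ > 0` (the bottom of the
spectrum of `L^{0,α}` is strictly positive) and the unkilled diffusion is recurrent
(`∫₀^∞ ρ⁻¹ = ∞`), then the speed measure is finite: `∫₀^∞ ρ < ∞`. -/
theorem positive_lam0_recurrent_implies_finite_speed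
    (b : ℝ → ℝ) (α : ℝ≥0∞)
    (hc : Coeffs b (fun _ => 0)) (h0 : RegularZero b) (hinf : InaccessibleInfty b)
    (hlam : 0 < lam0 b (fun _ => 0) α)
    (hrec : Recurrent b) :
    IntegrableOn (fun x => rho b x) (Set.Ioi 0) volume :=
  positive_lam0_recurrent_implies_finite_speed_general b α hc h0 hlam hrec

end KS
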